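/- For all integers n > k ≥ 1, b(n,k) = (1/k) · ∑_{k'=1}^{k} b(n−k, k'). -/

import Mathlib

/-! Deleting one copy of the largest part `k` is a bijection from the partitions of `n` with
largest part `k` onto the partitions of `n - k` with all parts at most `k`, and it multiplies the
weight `1 / ∏ parts` by `k`. Summing the latter partitions according to their largest part
`k' ∈ [1, k]` gives `∑ k', b(n - k, k')`. -/

open scoped BigOperators

/-- `bk n k` is the sum, over all integer partitions of `n` whose largest part equals `k`,
of the reciprocal of the product of the parts.  (If no partition of `n` has largest part `k`,
in particular if `k > n ≥ 1` or `n = 0` and `k ≥ 1`, this sum is empty and `bk n k = 0`.) -/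
noncomputable def bk (n k : ℕ) : ℝ :=
  ∑ p : Nat.Partition n,
    if p.parts.sup = k then (p.parts.map fun i => (1 : ℝ) / i).prod else 0

open Finset

theorem Multiset.sup_mem_of_ne_zero {α : Type*} [LinearOrder α] [OrderBot α] {s : Multiset α}
    (hs : s ≠ 0) : s.sup ∈ s := by
  induction s using Multiset.induction_on with
  | empty => contradiction
  | cons a s ih =>
    rw [Multiset.sup_cons]
    rcases eq_or_ne s 0 with rfl | hs
    · simp
    · exact sup_ind a s.sup (Multiset.mem_cons_self a s) (Multiset.mem_cons_of_mem (ih hs))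

theorem Nat.Partition.sup_mem_parts {n : ℕ} (p : n.Partition) (hn : n ≠ 0) :
    p.parts.sup ∈ p.parts :=
  Multiset.sup_mem_of_ne_zero fun h => hn (by simpa [h] using p.parts_sum.symm)

noncomputable def invProd (s : Multiset ℕ) : ℝ := (s.map fun i => (1 : ℝ) / i).prod

theorem invProd_cons (a : ℕ) (s : Multiset ℕ) : invProd (a ::ₘ s) = 1 / a * invProd s := by
  simp [invProd]

theorem bk_eq_sum_invProd (n k : ℕ) :
    bk n k = ∑ p : n.Partition with p.parts.sup = k, invProd p.parts := by
  rw [sum_filter]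
  rfl

theorem sum_Icc_bk_eq_sum_invProd_sup_le {m : ℕ} (hm : m ≠ 0) (k : ℕ) :
    ∑ k' ∈ Icc 1 k, bk m k' = ∑ q : m.Partition with q.parts.sup ≤ k, invProd q.parts := by
  have hsup_mem : ∀ q ∈ ({q : m.Partition | q.parts.sup ≤ k} : Finset _),
      q.parts.sup ∈ Icc 1 k := fun q hq =>
    mem_Icc.2 ⟨q.parts_pos (q.sup_mem_parts hm), (mem_filter.1 hq).2⟩
  rw [← sum_fiberwise_of_maps_to hsup_mem]
  refine sum_congr rfl fun k' hk' => ?_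
  rw [bk_eq_sum_invProd, filter_filter]
  refine sum_congr (filter_congr fun q _ => ?_) fun _ _ => rfl
  exact ⟨fun h => ⟨h ▸ (mem_Icc.1 hk').2, h⟩, And.right⟩

theorem sum_invProd_sup_eq {n k : ℕ} (hk : 1 ≤ k) (hkn : k ≤ n) :
    ∑ p : n.Partition with p.parts.sup = k, invProd p.parts
      = 1 / k * ∑ q : (n - k).Partition with q.parts.sup ≤ k, invProd q.parts := by
  have hmem : ∀ p : n.Partition, p.parts.sup = k → k ∈ p.parts := fun p hp =>
    hp ▸ p.sup_mem_parts (by omega)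
  let e := Nat.Partition.partitionWithPartEquiv hk hkn
  rw [mul_sum]
  refine sum_bij' (fun p hp => e ⟨p, hmem p (mem_filter.1 hp).2⟩) (fun q _ => (e.symm q).1)
    ?_ ?_ ?_ ?_ ?_
  · intro p hp
    simpa [e] using (Multiset.sup_mono (p.parts.erase_subset k)).trans (mem_filter.1 hp).2.le
  · intro q hq
    simpa [e] using (mem_filter.1 hq).2
  · intro p _
    simp [e]
  · intro q _
    simp [e]
  · intro p hp
    rw [Nat.Partition.partitionWithPartEquiv_apply_parts, ← invProd_cons,
      Multiset.cons_erase (hmem p (mem_filter.1 hp).2)]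

theorem stmt2 (n k : ℕ) (hk : 1 ≤ k) (hkn : k < n) :
    bk n k = (1 / (k : ℝ)) * ∑ k' ∈ Finset.Icc 1 k, bk (n - k) k' := by
  rw [bk_eq_sum_invProd, sum_invProd_sup_eq hk hkn.le,
    sum_Icc_bk_eq_sum_invProd_sup_le (Nat.sub_ne_zero_of_lt hkn)]
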